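/- For all n ≥ 0, P_{n+1}(x) = (1+x^2)·Σ_{k=0}^{n} C(n,k)·Q_k(x)·Q_{n-k}(x). -/

import Mathlib

open Polynomial Finset

noncomputable def tanDerivPoly : ℕ → Polynomial ℝ
  | 0 => X
  | n + 1 => (1 + X ^ 2) * derivative (tanDerivPoly n)

noncomputable def secDerivPoly : ℕ → Polynomial ℝ
  | 0 => 1
  | n + 1 => (1 + X ^ 2) * derivative (secDerivPoly n) + X * secDerivPoly n

/-! Write `D = (1 + x²) d/dx`. Then `Q_n = (D + x)ⁿ 1`, and `D + 2x` obeys the twisted Leibniz rule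
`(D + 2x)(fg) = ((D + x) f) g + f ((D + x) g)`, so iterating gives
`(D + 2x)ⁿ 1 = ∑ C(n,k) Q_k Q_{n-k}`. On the other side `D((1 + x²) h) = (1 + x²)(D + 2x) h`
because `(1 + x²)' = 2x`, so `P_{n+1} = Dⁿ (1 + x²) = (1 + x²)(D + 2x)ⁿ 1`. -/

theorem iterate_map_mul_eq_sum_antidiagonal {R : Type*} [NonUnitalNonAssocSemiring R]
    (A B C : R →+ R) (hC : ∀ f g, C (f * g) = A f * g + f * B g) (n : ℕ) (f g : R) :
    C^[n] (f * g) = ∑ ij ∈ antidiagonal n, n.choose ij.1 • (A^[ij.1] f * B^[ij.2] g) := by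
  induction n with
  | zero => simp
  | succ n ih =>
    rw [sum_antidiagonal_choose_succ_nsmul (fun i j => A^[i] f * B^[j] g) n]
    simp only [Function.iterate_succ_apply', ih, map_sum, map_nsmul, hC, smul_add,
      sum_add_distrib]
    rw [add_comm]
    congr 1
    refine sum_congr rfl fun ⟨i, j⟩ hij ↦ ?_
    rw [n.choose_symm_of_eq_add (mem_antidiagonal.1 hij).symm]

theorem iterate_map_mul_eq_sum_range {R : Type*} [NonUnitalNonAssocSemiring R]
    (A B C : R →+ R) (hC : ∀ f g, C (f * g) = A f * g + f * B g) (n : ℕ) (f g : R) :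
    C^[n] (f * g) = ∑ k ∈ range (n + 1), n.choose k • (A^[k] f * B^[n - k] g) := by
  rw [iterate_map_mul_eq_sum_antidiagonal A B C hC]
  exact Nat.sum_antidiagonal_eq_sum_range_succ (fun i j ↦ n.choose i • (A^[i] f * B^[j] g)) n

namespace Polynomial

variable {R : Type*} [CommSemiring R]

noncomputable def twistedDerivative (w a : R[X]) : R[X] →+ R[X] :=
  (AddMonoidHom.mulLeft w).comp (derivative (R := R)).toAddMonoidHom + AddMonoidHom.mulLeft a

theorem twistedDerivative_apply (w a f : R[X]) :
    twistedDerivative w a f = w * derivative f + a * f := rfl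

theorem twistedDerivative_add_mul (w a b f g : R[X]) :
    twistedDerivative w (a + b) (f * g) =
      twistedDerivative w a f * g + f * twistedDerivative w b g := by
  simp only [twistedDerivative_apply, derivative_mul]
  ring

theorem mul_derivative_mul_eq_mul_twistedDerivative (w h : R[X]) :
    w * derivative (w * h) = w * twistedDerivative w (derivative w) h := by
  rw [twistedDerivative_apply, derivative_mul]
  ring

end Polynomial

theorem secDerivPoly_eq_iterate (n : ℕ) :
    secDerivPoly n = (twistedDerivative (1 + X ^ 2) X)^[n] 1 := by
  induction n with
  | zero => rfl
  | succ n ih => rw [Function.iterate_succ_apply', ← ih, twistedDerivative_apply, secDerivPoly]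

theorem tanDerivPoly_succ_eq_iterate (n : ℕ) :
    tanDerivPoly (n + 1) = (1 + X ^ 2) * (twistedDerivative (1 + X ^ 2) (2 * X))^[n] 1 := by
  induction n with
  | zero => simp [tanDerivPoly]
  | succ n ih =>
    have hw : derivative (1 + X ^ 2 : ℝ[X]) = 2 * X := by
      rw [derivative_add, derivative_one, derivative_X_sq, zero_add, C_ofNat]
    rw [tanDerivPoly, ih, mul_derivative_mul_eq_mul_twistedDerivative, hw,
      Function.iterate_succ_apply']

theorem tanDerivPoly_eq_sec_convolution (n : ℕ) :
    tanDerivPoly (n + 1) =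
      (1 + X ^ 2) * ∑ k ∈ Finset.range (n + 1),
        (n.choose k : Polynomial ℝ) * secDerivPoly k * secDerivPoly (n - k) := by
  have hleibniz := twistedDerivative_add_mul (1 + X ^ 2 : ℝ[X]) X X
  rw [← two_mul] at hleibniz
  have hconv := iterate_map_mul_eq_sum_range _ _ _ hleibniz n 1 1
  rw [mul_one] at hconv
  rw [tanDerivPoly_succ_eq_iterate, hconv]
  simp only [secDerivPoly_eq_iterate, nsmul_eq_mul, mul_assoc]
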